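/- Let (k,l,m) be an admissible triple, i.e. k = l + m - 2r with 0 ≤ r ≤ min(l,m), and let q ∈ (0,1) with q + q^{-1} = N ≥ 3. Define the theta-net θ_q(k,l,m) = ([r]_q! [l-r]_q! [m-r]_q! [k+r+1]_q!) / ([l]_q! [m]_q! [k]_q!). Then N^r [k+1]_q / θ_q(k,l,m) = 1 + O(1/N²) as N → ∞, i.e. there is a constant C (depending on k,l,m) with |N^r [k+1]_q / θ_q(k,l,m) - 1| ≤ C/N² for all N ≥ 3. -/

import Mathlib

/-
Put `N = q + q⁻¹`. Then `[n+1]_q` is the value at `N` of the Chebyshev polynomial `S_n`, which is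
monic of degree `n` with vanishing subleading coefficient. Hence `N ^ r [k+1]_q / θ_q(k,l,m)` is
`P(N) / Q(N)` for two products `P`, `Q` of such polynomials (and of `X ^ r`): both are monic with
zero subleading coefficient, and admissibility makes their degrees equal to a common `D`. So
`deg (P - Q) ≤ D - 2`, while `Q(N) ≥ q⁻¹ ^ D ≥ (N / 2) ^ D` since every `[n+1]_q ≥ q⁻ⁿ`.
-/

/-- Quantum integer `[k]_q = (q^{-k} - q^k)/(q^{-1} - q)`. -/
noncomputable def qint (q : ℝ) (k : ℕ) : ℝ := (q⁻¹ ^ k - q ^ k) / (q⁻¹ - q)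

/-- Quantum factorial `[n]_q!`. -/
noncomputable def qfact (q : ℝ) (n : ℕ) : ℝ := ∏ j ∈ Finset.range n, qint q (j + 1)

/-- The quantum parameter `q = (2/N)/(1 + √(1-4/N²))`, the solution of `q + q⁻¹ = N` in `(0,1)`. -/
noncomputable def qpar (N : ℝ) : ℝ := (2 / N) / (1 + Real.sqrt (1 - 4 / N ^ 2))

/-- Theta net `θ_q(k,l,m)` for an admissible triple `k = l + m - 2r`. -/
noncomputable def thetaNet (q : ℝ) (k l m r : ℕ) : ℝ :=
  qfact q r * qfact q (l - r) * qfact q (m - r) * qfact q (k + r + 1) /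
    (qfact q l * qfact q m * qfact q k)

open Polynomial Finset

namespace Polynomial.Chebyshev

variable {R : Type*} [CommRing R]

theorem S_natCast_add_two (n : ℕ) : S R (n + 2 : ℕ) = X * S R (n + 1 : ℕ) - S R n := by
  push_cast
  exact S_add_two R n

theorem coeff_S_of_lt : ∀ {n j : ℕ}, n < j → (S R n).coeff j = 0
  | 0, j, h => by simp [coeff_one, h.ne']
  | 1, j, h => by simp [coeff_X, h.ne]
  | n + 2, j + 1, h => by
    rw [S_natCast_add_two, coeff_sub, coeff_X_mul, coeff_S_of_lt (by omega),
      coeff_S_of_lt (by omega), sub_zero]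

theorem coeff_S_self : ∀ n : ℕ, (S R n).coeff n = 1
  | 0 => by simp
  | 1 => by simp
  | n + 2 => by
    rw [S_natCast_add_two, coeff_sub, coeff_X_mul, coeff_S_self, coeff_S_of_lt (by omega),
      sub_zero]

theorem coeff_S_succ_self : ∀ n : ℕ, (S R (n + 1 : ℕ)).coeff n = 0
  | 0 => by simp
  | 1 => by simp [S_two, coeff_one]
  | n + 2 => by
    rw [S_natCast_add_two, coeff_sub, coeff_X_mul, coeff_S_succ_self, coeff_S_of_lt (by omega),
      sub_zero]

variable [Nontrivial R]

theorem natDegree_S (n : ℕ) : (S R n).natDegree = n :=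
  natDegree_eq_of_le_of_coeff_ne_zero
    (natDegree_le_iff_coeff_eq_zero.2 fun _ hj => coeff_S_of_lt (by exact_mod_cast hj))
    (by simp [coeff_S_self])

theorem monic_S (n : ℕ) : (S R n).Monic := by
  rw [Monic, leadingCoeff, natDegree_S, coeff_S_self]

theorem nextCoeff_S (n : ℕ) : (S R n).nextCoeff = 0 := by
  cases n with
  | zero => simp [nextCoeff]
  | succ n => rw [nextCoeff_of_natDegree_pos (by rw [natDegree_S]; omega), natDegree_S,
      Nat.add_sub_cancel, coeff_S_succ_self]

end Polynomial.Chebyshev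

namespace Polynomial

theorem Monic.add_two_le_natDegree_of_mem_support_sub {R : Type*} [Ring R] {P Q : R[X]}
    (hP : P.Monic) (hQ : Q.Monic) (hdeg : P.natDegree = Q.natDegree)
    (hnext : P.nextCoeff = Q.nextCoeff) {j : ℕ} (hj : j ∈ (P - Q).support) :
    j + 2 ≤ Q.natDegree := by
  by_contra hlt
  suffices P.coeff j = Q.coeff j from mem_support_iff.1 hj (by rw [coeff_sub, this, sub_self])
  obtain hj | rfl | hj : Q.natDegree < j ∨ j = Q.natDegree ∨ j + 1 = Q.natDegree := by omega
  · rw [coeff_eq_zero_of_natDegree_lt (hdeg ▸ hj), coeff_eq_zero_of_natDegree_lt hj]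
  · rw [← hdeg, hP.coeff_natDegree, hdeg, hQ.coeff_natDegree]
  · have hP' := nextCoeff_of_natDegree_pos (p := P) (by omega)
    have hQ' := nextCoeff_of_natDegree_pos (p := Q) (by omega)
    rw [hdeg, ← hj, Nat.add_sub_cancel] at hP'
    rw [← hj, Nat.add_sub_cancel] at hQ'
    rw [← hP', ← hQ', hnext]

theorem abs_eval_mul_sq_le (p : ℝ[X]) {D : ℕ} (hp : ∀ j ∈ p.support, j + 2 ≤ D) {x : ℝ}
    (hx : 1 ≤ x) : |p.eval x| * x ^ 2 ≤ (∑ j ∈ p.support, |p.coeff j|) * x ^ D := by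
  rw [eval_eq_sum, sum_def, sum_mul]
  refine (mul_le_mul_of_nonneg_right (abs_sum_le_sum_abs _ _) (by positivity)).trans ?_
  rw [sum_mul]
  refine sum_le_sum fun j hj => ?_
  rw [abs_mul, abs_pow, abs_of_nonneg (by linarith : (0 : ℝ) ≤ x), mul_assoc, ← pow_add]
  exact mul_le_mul_of_nonneg_left (pow_le_pow_right₀ hx (hp j hj)) (abs_nonneg _)

theorem exists_abs_eval_div_eval_sub_one_le {P Q : ℝ[X]} (hP : P.Monic) (hQ : Q.Monic)
    (hdeg : P.natDegree = Q.natDegree) (hnext : P.nextCoeff = Q.nextCoeff) {c : ℝ} (hc : 0 < c) :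
    ∃ C, ∀ x, 1 ≤ x → (c * x) ^ Q.natDegree ≤ Q.eval x →
      |P.eval x / Q.eval x - 1| ≤ C / x ^ 2 := by
  set A := ∑ j ∈ (P - Q).support, |(P - Q).coeff j|
  refine ⟨A / c ^ Q.natDegree, fun x hx hQx => ?_⟩
  have hQ0 : 0 < Q.eval x := lt_of_lt_of_le (by positivity) hQx
  have hA : 0 ≤ A := sum_nonneg fun _ _ => abs_nonneg _
  have hPQ := abs_eval_mul_sq_le (P - Q)
    (fun j hj => hP.add_two_le_natDegree_of_mem_support_sub hQ hdeg hnext hj) hx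
  rw [eval_sub] at hPQ
  rw [div_sub_one hQ0.ne', abs_div, abs_of_pos hQ0, div_le_div_iff₀ hQ0 (by positivity)]
  calc |P.eval x - Q.eval x| * x ^ 2 ≤ A * x ^ Q.natDegree := hPQ
    _ = A / c ^ Q.natDegree * (c * x) ^ Q.natDegree := by field_simp; ring
    _ ≤ A / c ^ Q.natDegree * Q.eval x := by gcongr

end Polynomial

section QuantumIntegers

variable {q : ℝ}

theorem qint_add_two (hq : q ≠ 0) (n : ℕ) :
    qint q (n + 2) = (q + q⁻¹) * qint q (n + 1) - qint q n := by
  have h : q * q⁻¹ = 1 := mul_inv_cancel₀ hq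
  rw [qint, qint, qint, ← mul_div_assoc, div_sub_div_same]
  congr 1
  linear_combination (q ^ n - q⁻¹ ^ n) * h

theorem Polynomial.Chebyshev.S_eval_add_inv (hq : q ≠ 0) (hq' : q⁻¹ ≠ q) :
    ∀ n : ℕ, (S ℝ n).eval (q + q⁻¹) = qint q (n + 1)
  | 0 => by simp [qint, sub_ne_zero.2 hq']
  | 1 => by
    rw [Nat.cast_one, S_one, eval_X, qint_add_two hq, zero_add, qint, qint]
    simp [sub_ne_zero.2 hq']
  | n + 2 => by
    rw [S_natCast_add_two, eval_sub, eval_mul, eval_X, S_eval_add_inv hq hq',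
      S_eval_add_inv hq hq']
    exact (qint_add_two hq (n + 1)).symm

theorem inv_pow_le_qint_succ (hq0 : 0 < q) (hq1 : q < 1) (n : ℕ) :
    q⁻¹ ^ n ≤ qint q (n + 1) := by
  have hinv : 1 < q⁻¹ := one_lt_inv₀ hq0 |>.2 hq1
  rw [qint, le_div_iff₀ (by linarith), pow_succ, pow_succ]
  have : q ^ n ≤ q⁻¹ ^ n := pow_le_pow_left₀ hq0.le (by linarith) n
  nlinarith

theorem inv_pow_choose_two_le_qfact (hq0 : 0 < q) (hq1 : q < 1) :
    ∀ n : ℕ, q⁻¹ ^ n.choose 2 ≤ qfact q n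
  | 0 => by simp [qfact]
  | n + 1 => by
    rw [qfact, prod_range_succ, ← qfact, Nat.choose_succ_succ', Nat.choose_one_right, add_comm,
      pow_add]
    have ih := inv_pow_choose_two_le_qfact hq0 hq1 n
    exact mul_le_mul ih (inv_pow_le_qint_succ hq0 hq1 n) (by positivity)
      ((pow_nonneg (by positivity) _).trans ih)

end QuantumIntegers

section QuantumParameter

variable {N : ℝ}

theorem inv_qpar (N : ℝ) : (qpar N)⁻¹ = N * (1 + √(1 - 4 / N ^ 2)) / 2 := by
  rw [qpar, inv_div, div_div_eq_mul_div, mul_comm]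

theorem qpar_pos (hN : 0 < N) : 0 < qpar N := by
  rw [qpar]; positivity

theorem half_le_inv_qpar (hN : 0 ≤ N) : N / 2 ≤ (qpar N)⁻¹ := by
  rw [inv_qpar]
  have := Real.sqrt_nonneg (1 - 4 / N ^ 2)
  nlinarith

theorem qpar_add_inv (hN : 2 ≤ N) : qpar N + (qpar N)⁻¹ = N := by
  have hN0 : N ≠ 0 := by positivity
  rw [inv_qpar, qpar]
  set s := √(1 - 4 / N ^ 2)
  have hs : N ^ 2 * s ^ 2 = N ^ 2 - 4 := by
    rw [Real.sq_sqrt (sub_nonneg.2 ((div_le_one (by positivity)).2 (by nlinarith)))]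
    field_simp
  have : 0 ≤ s := Real.sqrt_nonneg _
  field_simp
  linear_combination hs

theorem qpar_lt_one (hN : 2 < N) : qpar N < 1 := by
  have hs : 0 < √(1 - 4 / N ^ 2) :=
    Real.sqrt_pos.2 (sub_pos.2 ((div_lt_one (by positivity)).2 (by nlinarith)))
  refine (one_lt_inv₀ (qpar_pos (by linarith))).1 ?_
  rw [inv_qpar]
  nlinarith

end QuantumParameter

section QuantumFactorialPolynomials

open Polynomial.Chebyshev

variable (R : Type*) [CommRing R] (k l m r n : ℕ)

noncomputable def qfactPoly : R[X] := ∏ j ∈ range n, S R j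

noncomputable def thetaNumPoly : R[X] :=
  X ^ r * S R k * qfactPoly R l * qfactPoly R m * qfactPoly R k

noncomputable def thetaDenPoly : R[X] :=
  qfactPoly R r * qfactPoly R (l - r) * qfactPoly R (m - r) * qfactPoly R (k + r + 1)

variable [Nontrivial R]

theorem monic_qfactPoly : (qfactPoly R n).Monic :=
  monic_prod_of_monic _ _ fun j _ => monic_S j

theorem natDegree_qfactPoly : (qfactPoly R n).natDegree = n.choose 2 := by
  rw [qfactPoly, natDegree_prod_of_monic _ _ fun j _ => monic_S j]
  simp only [natDegree_S, sum_range_id, Nat.choose_two_right]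

theorem nextCoeff_qfactPoly : (qfactPoly R n).nextCoeff = 0 := by
  rw [qfactPoly, Monic.nextCoeff_prod _ _ fun j _ => monic_S j]
  exact sum_eq_zero fun j _ => nextCoeff_S j

theorem monic_thetaNumPoly : (thetaNumPoly R k l m r).Monic := by
  simp (maxDischargeDepth := 5) only [thetaNumPoly, Monic.mul, monic_X_pow, monic_S,
    monic_qfactPoly]

theorem monic_thetaDenPoly : (thetaDenPoly R k l m r).Monic := by
  simp (maxDischargeDepth := 5) only [thetaDenPoly, Monic.mul, monic_qfactPoly]

theorem nextCoeff_thetaNumPoly : (thetaNumPoly R k l m r).nextCoeff = 0 := by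
  have hX : (X ^ r : R[X]).nextCoeff = 0 := by
    rw [monic_X.nextCoeff_pow, nextCoeff_of_natDegree_pos (by simp), natDegree_X, coeff_X_zero,
      smul_zero]
  simp (maxDischargeDepth := 5) only [thetaNumPoly, Monic.nextCoeff_mul, Monic.mul, monic_X_pow,
    monic_S, monic_qfactPoly, hX, nextCoeff_S, nextCoeff_qfactPoly, add_zero]

theorem nextCoeff_thetaDenPoly : (thetaDenPoly R k l m r).nextCoeff = 0 := by
  simp (maxDischargeDepth := 5) only [thetaDenPoly, Monic.nextCoeff_mul, Monic.mul,
    monic_qfactPoly, nextCoeff_qfactPoly, add_zero]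

theorem natDegree_thetaNumPoly :
    (thetaNumPoly R k l m r).natDegree = r + k + l.choose 2 + m.choose 2 + k.choose 2 := by
  simp (maxDischargeDepth := 5) only [thetaNumPoly, Monic.natDegree_mul, Monic.mul, monic_X_pow,
    monic_S, monic_qfactPoly, natDegree_X_pow, natDegree_S, natDegree_qfactPoly]

theorem natDegree_thetaDenPoly : (thetaDenPoly R k l m r).natDegree =
    r.choose 2 + (l - r).choose 2 + (m - r).choose 2 + (k + r + 1).choose 2 := by
  simp (maxDischargeDepth := 5) only [thetaDenPoly, Monic.natDegree_mul, Monic.mul,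
    monic_qfactPoly, natDegree_qfactPoly]

variable {k l m r}

theorem natDegree_thetaNumPoly_eq_thetaDenPoly (hl : r ≤ l) (hm : r ≤ m)
    (hk : k + 2 * r = l + m) :
    (thetaNumPoly R k l m r).natDegree = (thetaDenPoly R k l m r).natDegree := by
  obtain ⟨a, rfl⟩ := Nat.exists_eq_add_of_le hl
  obtain ⟨b, rfl⟩ := Nat.exists_eq_add_of_le hm
  obtain rfl : k = a + b := by omega
  rw [natDegree_thetaNumPoly, natDegree_thetaDenPoly, Nat.add_sub_cancel_left,
    Nat.add_sub_cancel_left]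
  apply Nat.cast_injective (R := ℚ)
  push_cast [Nat.cast_choose_two]
  ring

end QuantumFactorialPolynomials

section Evaluation

open Polynomial.Chebyshev

variable {q : ℝ} {k l m r : ℕ}

theorem qfactPoly_eval_add_inv (hq : q ≠ 0) (hq' : q⁻¹ ≠ q) (n : ℕ) :
    (qfactPoly ℝ n).eval (q + q⁻¹) = qfact q n := by
  rw [qfactPoly, eval_prod, qfact]
  exact prod_congr rfl fun j _ => S_eval_add_inv hq hq' j

theorem pow_mul_qint_div_thetaNet (hq : q ≠ 0) (hq' : q⁻¹ ≠ q) :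
    (q + q⁻¹) ^ r * qint q (k + 1) / thetaNet q k l m r =
      (thetaNumPoly ℝ k l m r).eval (q + q⁻¹) /
        (thetaDenPoly ℝ k l m r).eval (q + q⁻¹) := by
  simp only [thetaNumPoly, thetaDenPoly, thetaNet, eval_mul, eval_pow, eval_X,
    S_eval_add_inv hq hq', qfactPoly_eval_add_inv hq hq']
  rw [div_div_eq_mul_div]
  ring

theorem inv_pow_natDegree_le_eval_thetaDenPoly (hq0 : 0 < q) (hq1 : q < 1) :
    q⁻¹ ^ (thetaDenPoly ℝ k l m r).natDegree ≤
      (thetaDenPoly ℝ k l m r).eval (q + q⁻¹) := by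
  have hq : q⁻¹ ≠ q := (hq1.trans (one_lt_inv₀ hq0 |>.2 hq1)).ne'
  have h := inv_pow_choose_two_le_qfact hq0 hq1
  have h0 n : 0 ≤ qfact q n := (pow_nonneg (inv_nonneg.2 hq0.le) _).trans (h n)
  rw [natDegree_thetaDenPoly, pow_add, pow_add, pow_add]
  simp only [thetaDenPoly, eval_mul, qfactPoly_eval_add_inv hq0.ne' hq]
  gcongr ?_ * ?_ * ?_ * ?_
  all_goals first | exact h _ | apply_rules [mul_nonneg]

end Evaluation

theorem stmt_5 (k l m r : ℕ) (hr : r ≤ min l m) (hk : k + 2 * r = l + m) :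
    ∃ C : ℝ, ∀ N : ℕ, 3 ≤ N →
      |(N : ℝ) ^ r * qint (qpar N) (k + 1) / thetaNet (qpar N) k l m r - 1|
        ≤ C / (N : ℝ) ^ 2 := by
  obtain ⟨C, hC⟩ := exists_abs_eval_div_eval_sub_one_le (monic_thetaNumPoly ℝ k l m r)
    (monic_thetaDenPoly ℝ k l m r)
    (natDegree_thetaNumPoly_eq_thetaDenPoly ℝ (le_min_iff.1 hr).1 (le_min_iff.1 hr).2 hk)
    (by rw [nextCoeff_thetaNumPoly, nextCoeff_thetaDenPoly]) one_half_pos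
  refine ⟨C, fun N hN => ?_⟩
  have hN : (3 : ℝ) ≤ N := by exact_mod_cast hN
  set q := qpar N
  have hq0 : 0 < q := qpar_pos (by linarith)
  have hq1 : q < 1 := qpar_lt_one (by linarith)
  have hsum : q + q⁻¹ = N := qpar_add_inv (by linarith)
  have hq : q⁻¹ ≠ q := (hq1.trans (one_lt_inv₀ hq0 |>.2 hq1)).ne'
  -- `q` is a local definition, so this only replaces the occurrences of `N` outside of `q`.
  rw [← hsum, pow_mul_qint_div_thetaNet hq0.ne' hq]
  refine hC _ (by linarith) ?_
  calc (1 / 2 * (q + q⁻¹)) ^ _ ≤ q⁻¹ ^ _ := by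
        gcongr
        linarith [half_le_inv_qpar (N := N) (by linarith)]
    _ ≤ _ := inv_pow_natDegree_le_eval_thetaDenPoly hq0 hq1
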